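/- Fix integers n ≥ 1 and k ≥ 1, and set N = kn+1 and f̂^∅(y) = k(y-1)+1 for y ∈ [n]. The number of k-Dyck tableaux |𝒯[N×n; f̂^∅]| equals the number of accessible transition structures δ on states [n] over a k-letter alphabet whose states are indexed in breadth-first order, i.e., such that, denoting for each state p by u_p the shortlex-smallest word u ∈ [k]* with δ(1, u) = p, one has that p < q implies u_p precedes u_q in shortlex order. -/

import Mathlib

open scoped Classical BigOperators

namespace ArxivAutomata

/-- For `T : Fin M → Fin n` and a row `y`, the 1-based position
`x_T(y) = min T⁻¹(y)` of the first (red) mark in row `y`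
(columns are numbered `1, …, M`). -/
noncomputable def xT {M n : ℕ} (T : Fin M → Fin n) (y : Fin n) : ℕ :=
  sInf {x : ℕ | ∃ hx : x - 1 < M, 1 ≤ x ∧ T ⟨x - 1, hx⟩ = y}

/-- A tableau in `𝒯[M × n]`: a surjection `T : [M] → [n]` whose first-preimage
function `x_T` is strictly increasing. -/
def IsTableau {M n : ℕ} (T : Fin M → Fin n) : Prop :=
  Function.Surjective T ∧ StrictMono fun y : Fin n => xT T y

/-- The finite set `𝒯[M × n]` of tableaux. -/
noncomputable def tabSet (M n : ℕ) : Finset (Fin M → Fin n) :=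
  Finset.univ.filter fun T => IsTableau T

/-- The finite set `𝒯[M × n; f]` of tableaux whose backbone is dominated by
`f : [n] → [M]` (with rows indexed by `Fin n`, `f y` bounding row `y+1`). -/
noncomputable def tabSetLe (M n : ℕ) (f : Fin n → ℕ) : Finset (Fin M → Fin n) :=
  Finset.univ.filter fun T => IsTableau T ∧ ∀ y : Fin n, xT T y ≤ f y

/-- Extension of a transition structure to words: `run δ p u = δ(p, u)`. -/
def run {n k : ℕ} (δ : Fin n → Fin k → Fin n) (p : Fin n) (u : List (Fin k)) : Fin n :=
  u.foldl δ p

/-- A transition structure is accessible if every state is reachable from the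
initial state (the state with index 0, representing state 1). -/
def Accessible {n k : ℕ} (δ : Fin n → Fin k → Fin n) : Prop :=
  ∀ q : Fin n, ∃ u : List (Fin k), run δ ⟨0, Fin.pos q⟩ u = q

/-- Strict shortlex order on words: first by length, then lexicographically. -/
def ShortlexLt {k : ℕ} (u v : List (Fin k)) : Prop :=
  u.length < v.length ∨ (u.length = v.length ∧ List.Lex (· < ·) u v)

/-- `u` is the shortlex-smallest word with `δ(i₀, u) = p`. -/
def IsMinWord {n k : ℕ} (δ : Fin n → Fin k → Fin n) (i₀ : Fin n)
    (u : List (Fin k)) (p : Fin n) : Prop :=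
  run δ i₀ u = p ∧ ∀ v : List (Fin k), run δ i₀ v = p → u = v ∨ ShortlexLt u v

/-- The states of `δ` are indexed in breadth-first order: `p < q` implies that
the shortlex-smallest word reaching `p` shortlex-precedes the one reaching `q`. -/
def BFSOrdered {n k : ℕ} (δ : Fin n → Fin k → Fin n) (i₀ : Fin n) : Prop :=
  ∀ p q : Fin n, p < q → ∀ u v : List (Fin k),
    IsMinWord δ i₀ u p → IsMinWord δ i₀ v q → ShortlexLt u v

/-!
Listing the transitions `δ(p, a)` in lexicographic order of `(p, a)`, preceded by the initial
state, identifies transition structures with the maps `T : [kn+1] → [n]` that start with the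
initial state, and every tableau in `𝒯[kn+1 × n; f̂^∅]` is such a map since `x_T(1) ≤ f̂^∅(1) = 1`.
For such a `T` the tableau conditions say: every other state `q` is the target of a transition,
the lexicographically first transition `(p, a)` into `q` has `p < q` (this is the bound on
`x_T(q)`), and these first transitions come in the order of their targets.

If `δ` is accessible and breadth-first ordered, the shortlex-least word reaching such a `q` is
`u_p a` for this first transition `(p, a)`, because `p ↦ u_p` is increasing and so `u_p a` and
`u_p' a'` compare like `(p, a)` and `(p', a')`. Conversely, under the three conditions the words
defined recursively by `u_q = u_p a` are the shortlex-least ones, and they increase with `q`.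
-/

section Shortlex

variable {k : ℕ} {u v w : List (Fin k)} {a b : Fin k}

theorem shortlexLt_iff_shortlex : ShortlexLt u v ↔ List.Shortlex (· < ·) u v :=
  List.shortlex_def.symm

theorem ShortlexLt.asymm (h : ShortlexLt u v) : ¬ShortlexLt v u := by
  rw [shortlexLt_iff_shortlex] at h ⊢
  exact Std.Asymm.asymm _ _ h

theorem ShortlexLt.irrefl (u : List (Fin k)) : ¬ShortlexLt u u := fun h => h.asymm h

theorem shortlexLt_trichotomous (u v : List (Fin k)) :
    ShortlexLt u v ∨ u = v ∨ ShortlexLt v u := by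
  simp only [shortlexLt_iff_shortlex]
  exact trichotomous_of (List.Shortlex (· < ·)) u v

theorem ShortlexLt.trans (h : ShortlexLt u v) (h' : ShortlexLt v w) : ShortlexLt u w := by
  rcases h with h | ⟨he, hl⟩ <;> rcases h' with h' | ⟨he', hl'⟩
  · exact Or.inl (h.trans h')
  · exact Or.inl (he' ▸ h)
  · exact Or.inl (he ▸ h')
  · exact Or.inr ⟨he.trans he', List.lex_trans lt_trans hl hl'⟩

theorem wellFounded_shortlexLt : WellFounded (@ShortlexLt k) :=
  (List.Shortlex.wf wellFounded_lt).mono fun _ _ => shortlexLt_iff_shortlex.1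

theorem shortlexLt_append_singleton (u : List (Fin k)) (a : Fin k) : ShortlexLt u (u ++ [a]) :=
  Or.inl (by simp)

theorem lex_append_singleton_iff (h : u.length = v.length) :
    List.Lex (· < ·) (u ++ [a]) (v ++ [b]) ↔ List.Lex (· < ·) u v ∨ u = v ∧ a < b := by
  induction u generalizing v with
  | nil =>
    obtain rfl := List.eq_nil_of_length_eq_zero h.symm
    simp [List.lex_singleton_iff]
  | cons c u ih =>
    obtain ⟨d, v, rfl⟩ := List.exists_cons_of_length_eq_add_one h.symm
    simp only [List.cons_append, List.cons_lex_cons_iff, ih (by simpa using h), List.cons.injEq]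
    tauto

theorem shortlexLt_append_singleton_iff :
    ShortlexLt (u ++ [a]) (v ++ [b]) ↔ ShortlexLt u v ∨ u = v ∧ a < b := by
  unfold ShortlexLt
  rcases lt_trichotomy u.length v.length with h | h | h
  · simp [h]
  · simp only [List.length_append, List.length_singleton, h, lt_self_iff_false, true_and, false_or,
      lex_append_singleton_iff h]
  · have : u ≠ v := by rintro rfl; exact lt_irrefl _ h
    simp [h.not_gt, h.ne', this]

theorem eq_or_shortlexLt_trans (h : u = v ∨ ShortlexLt u v) (h' : v = w ∨ ShortlexLt v w) :
    u = w ∨ ShortlexLt u w := by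
  rcases h with rfl | h
  · exact h'
  rcases h' with rfl | h'
  · exact Or.inr h
  · exact Or.inr (h.trans h')

theorem lt_of_shortlexLt {ι : Type*} [LinearOrder ι] {U : ι → List (Fin k)}
    (hU : ∀ i j, i < j → ShortlexLt (U i) (U j)) {i j : ι} (h : ShortlexLt (U i) (U j)) :
    i < j := by
  rcases lt_trichotomy i j with hij | rfl | hji
  · exact hij
  · exact absurd h (ShortlexLt.irrefl _)
  · exact absurd h (hU j i hji).asymm

theorem shortlexLt_append_of_lt {n : ℕ} {U : Fin n → List (Fin k)} {f f' : Fin n ×ₗ Fin k}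
    (h : f < f') (hU : (ofLex f).1 < (ofLex f').1 → ShortlexLt (U (ofLex f).1) (U (ofLex f').1)) :
    ShortlexLt (U (ofLex f).1 ++ [(ofLex f).2]) (U (ofLex f').1 ++ [(ofLex f').2]) := by
  rw [shortlexLt_append_singleton_iff]
  rcases Prod.Lex.lt_iff.1 h with h | ⟨he, h⟩
  · exact Or.inl (hU h)
  · exact Or.inr ⟨by rw [he], h⟩

end Shortlex

section FirstOccurrence

variable {ι β : Type*} {g : ι → β} {y : β} {i j : ι}

def IsFirstOcc [LT ι] (g : ι → β) (y : β) (i : ι) : Prop :=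
  g i = y ∧ ∀ j < i, g j ≠ y

theorem IsFirstOcc.le [LinearOrder ι] (hi : IsFirstOcc g y i) (hj : g j = y) : i ≤ j :=
  not_lt.1 fun h => hi.2 j h hj

theorem IsFirstOcc.unique [LinearOrder ι] (hi : IsFirstOcc g y i) (hj : IsFirstOcc g y j) :
    i = j :=
  le_antisymm (hi.le hj.1) (hj.le hi.1)

theorem exists_isFirstOcc [LinearOrder ι] [WellFoundedLT ι] (h : g j = y) :
    ∃ i, IsFirstOcc g y i := by
  obtain ⟨i, hi, hmin⟩ := wellFounded_lt.has_min {j | g j = y} ⟨j, h⟩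
  exact ⟨i, hi, fun j hj hgj => hmin j hgj hj⟩

theorem IsFirstOcc.comp_symm {κ : Type*} [Preorder ι] [Preorder κ] (e : ι ≃o κ)
    (h : IsFirstOcc g y i) : IsFirstOcc (g ∘ e.symm) y (e i) := by
  refine ⟨by simpa using h.1, fun j hj => h.2 _ ?_⟩
  simpa using e.symm.lt_iff_lt.2 hj

theorem IsFirstOcc.cons_succ {m : ℕ} {g : Fin m → β} {y₀ : β} {i : Fin m} (hy : y ≠ y₀)
    (h : IsFirstOcc g y i) : IsFirstOcc (Fin.cons y₀ g : Fin (m + 1) → β) y i.succ := by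
  refine ⟨by simpa using h.1, fun j hj => ?_⟩
  cases j using Fin.cases with
  | zero => simpa using hy.symm
  | succ j => simpa using h.2 j (Fin.succ_lt_succ_iff.1 hj)

theorem isFirstOcc_cons_zero {m : ℕ} (g : Fin m → β) (y₀ : β) :
    IsFirstOcc (Fin.cons y₀ g : Fin (m + 1) → β) y₀ 0 :=
  ⟨rfl, fun j hj => absurd hj (Fin.not_lt_zero j)⟩

theorem xT_eq_of_isFirstOcc {M n : ℕ} {T : Fin M → Fin n} {y : Fin n} {i : Fin M}
    (h : IsFirstOcc T y i) : xT T y = i + 1 := by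
  refine IsLeast.csInf_eq ⟨⟨by omega, by omega, by simpa using h.1⟩, ?_⟩
  rintro x ⟨hx, hx1, hTx⟩
  by_contra hlt
  exact h.2 ⟨x - 1, hx⟩ (Fin.lt_def.2 (by simp only; omega)) hTx

end FirstOccurrence

section Tableaux

variable {n k : ℕ}

theorem add_mul_lt_add_mul {a a' p p' : ℕ} (ha : a < k) (hp : p < p') :
    a + k * p < a' + k * p' := by
  have : k * (p + 1) ≤ k * p' := Nat.mul_le_mul_left k hp
  rw [Nat.mul_succ] at this
  omega

noncomputable def lexPos : Fin n ×ₗ Fin k ≃o Fin (k * n) :=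
  StrictMono.orderIsoOfSurjective (fun f => finCongr (Nat.mul_comm n k) (finProdFinEquiv (ofLex f)))
    (fun f f' h => by
      rcases Prod.Lex.lt_iff.1 h with h | ⟨he, h⟩
      · exact Fin.lt_def.2 (by simpa using add_mul_lt_add_mul (ofLex f).2.isLt h)
      · exact Fin.lt_def.2 (by simp [he, h]))
    ((finCongr _).surjective.comp (finProdFinEquiv.surjective.comp ofLex.surjective))

theorem lexPos_val (f : Fin n ×ₗ Fin k) : (lexPos f : ℕ) = (ofLex f).2 + k * (ofLex f).1 := by
  simp [lexPos]

theorem lexPos_lt_mul_iff {f : Fin n ×ₗ Fin k} {q : ℕ} :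
    (lexPos f : ℕ) < k * q ↔ (ofLex f).1 < q := by
  rw [lexPos_val]
  refine ⟨fun h => not_le.1 fun hq => ?_,
    fun h => by simpa using add_mul_lt_add_mul (a' := 0) (ofLex f).2.isLt h⟩
  have := Nat.mul_le_mul_left k hq
  omega

theorem mem_tabSetLe {M : ℕ} {f : Fin n → ℕ} {T : Fin M → Fin n} :
    T ∈ tabSetLe M n f ↔ IsTableau T ∧ ∀ y, xT T y ≤ f y := by
  simp [tabSetLe]

variable [NeZero n]

structure IsBFSTable (g : Fin n ×ₗ Fin k → Fin n) : Prop where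
  exists_parent : ∀ q ≠ 0, ∃ f, IsFirstOcc g q f ∧ (ofLex f).1 < q
  first_lt_first :
    ∀ {q r f f'}, q ≠ 0 → q < r → IsFirstOcc g q f → IsFirstOcc g r f' → f < f'

noncomputable def tableauOf (g : Fin n ×ₗ Fin k → Fin n) : Fin (k * n + 1) → Fin n :=
  Fin.cons 0 (g ∘ lexPos.symm)

variable {g : Fin n ×ₗ Fin k → Fin n}

theorem xT_tableauOf_zero : xT (tableauOf g) 0 = 1 :=
  xT_eq_of_isFirstOcc (isFirstOcc_cons_zero _ _)

theorem xT_tableauOf {q : Fin n} {f : Fin n ×ₗ Fin k} (hq : q ≠ 0) (hf : IsFirstOcc g q f) :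
    xT (tableauOf g) q = lexPos f + 2 :=
  xT_eq_of_isFirstOcc ((hf.comp_symm lexPos).cons_succ hq)

theorem isBFSTable_of_mem_tabSetLe
    (h : tableauOf g ∈ tabSetLe (k * n + 1) n fun y => k * (y : ℕ) + 1) : IsBFSTable g := by
  rw [mem_tabSetLe] at h
  obtain ⟨⟨hsurj, hmono⟩, hbound⟩ := h
  have hfirst : ∀ q ≠ 0, ∃ f, IsFirstOcc g q f := by
    intro q hq
    obtain ⟨i, hi⟩ := hsurj q
    cases i using Fin.cases with
    | zero => exact absurd hi.symm hq
    | succ j => exact exists_isFirstOcc (j := lexPos.symm j) (by simpa [tableauOf] using hi)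
  refine ⟨fun q hq => ?_, fun {q r f f'} hq hqr hf hf' => ?_⟩
  · obtain ⟨f, hf⟩ := hfirst q hq
    refine ⟨f, hf, lexPos_lt_mul_iff.1 ?_⟩
    have := hbound q
    rw [xT_tableauOf hq hf] at this
    omega
  · have := hmono hqr
    simp only [xT_tableauOf hq hf, xT_tableauOf (ne_zero_of_lt hqr) hf'] at this
    exact lexPos.lt_iff_lt.1 (Fin.lt_def.2 (by omega))

theorem mem_tabSetLe_of_isBFSTable (h : IsBFSTable g) :
    tableauOf g ∈ tabSetLe (k * n + 1) n fun y => k * (y : ℕ) + 1 := by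
  rw [mem_tabSetLe]
  refine ⟨⟨fun q => ?_, fun q r hqr => ?_⟩, fun q => ?_⟩
  · rcases eq_or_ne q 0 with rfl | hq
    · exact ⟨0, rfl⟩
    · obtain ⟨f, hf, -⟩ := h.exists_parent q hq
      exact ⟨(lexPos f).succ, by simpa [tableauOf] using hf.1⟩
  · obtain ⟨f', hf', -⟩ := h.exists_parent r (ne_zero_of_lt hqr)
    simp only [xT_tableauOf (ne_zero_of_lt hqr) hf']
    rcases eq_or_ne q 0 with rfl | hq
    · rw [xT_tableauOf_zero]
      omega
    · obtain ⟨f, hf, -⟩ := h.exists_parent q hq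
      rw [xT_tableauOf hq hf]
      have := lexPos.lt_iff_lt.2 (h.first_lt_first hq hqr hf hf')
      rw [Fin.lt_def] at this
      omega
  · rcases eq_or_ne q 0 with rfl | hq
    · rw [xT_tableauOf_zero]
      simp
    · obtain ⟨f, hf, hlt⟩ := h.exists_parent q hq
      rw [xT_tableauOf hq hf]
      have := lexPos_lt_mul_iff.2 hlt
      omega

theorem tableauOf_mem_tabSetLe_iff :
    tableauOf g ∈ tabSetLe (k * n + 1) n (fun y => k * (y : ℕ) + 1) ↔ IsBFSTable g :=
  ⟨isBFSTable_of_mem_tabSetLe, mem_tabSetLe_of_isBFSTable⟩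

theorem apply_zero_of_mem_tabSetLe {T : Fin (k * n + 1) → Fin n}
    (hT : T ∈ tabSetLe (k * n + 1) n fun y => k * (y : ℕ) + 1) : T 0 = 0 := by
  rw [mem_tabSetLe] at hT
  obtain ⟨⟨hsurj, -⟩, hbound⟩ := hT
  obtain ⟨i, hi⟩ := exists_isFirstOcc (hsurj 0).choose_spec
  have h := hbound 0
  rw [xT_eq_of_isFirstOcc hi] at h
  obtain rfl : i = 0 := Fin.ext (by simp at h; omega)
  exact hi.1

end Tableaux

section Transitions

variable {n k : ℕ}

def lexTable (δ : Fin n → Fin k → Fin n) (f : Fin n ×ₗ Fin k) : Fin n :=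
  δ (ofLex f).1 (ofLex f).2

noncomputable def transitionsOf (T : Fin (k * n + 1) → Fin n) : Fin n → Fin k → Fin n :=
  fun p a => T (lexPos (toLex (p, a))).succ

theorem transitionsOf_tableauOf [NeZero n] (δ : Fin n → Fin k → Fin n) :
    transitionsOf (tableauOf (lexTable δ)) = δ := by
  funext p a
  simp [transitionsOf, tableauOf, lexTable]

theorem tableauOf_transitionsOf [NeZero n] {T : Fin (k * n + 1) → Fin n} (hT : T 0 = 0) :
    tableauOf (lexTable (transitionsOf T)) = T := by
  conv_rhs => rw [← Fin.cons_self_tail T, hT]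
  unfold tableauOf
  congr 1
  funext j
  show T _ = T _
  simp

theorem card_tabSetLe_eq [NeZero n] :
    (tabSetLe (k * n + 1) n fun y => k * (y : ℕ) + 1).card =
      (Finset.univ.filter fun δ : Fin n → Fin k → Fin n => IsBFSTable (lexTable δ)).card := by
  refine Finset.card_nbij' transitionsOf (fun δ => tableauOf (lexTable δ)) (fun T hT => ?_)
    (fun δ hδ => ?_) (fun T hT => tableauOf_transitionsOf (apply_zero_of_mem_tabSetLe hT))
    (fun δ _ => transitionsOf_tableauOf δ)
  · simp only [Finset.coe_filter, Finset.mem_univ, true_and, Set.mem_ofPred_eq]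
    rw [← tableauOf_mem_tabSetLe_iff, tableauOf_transitionsOf (apply_zero_of_mem_tabSetLe hT)]
    exact hT
  · simp only [Finset.coe_filter, Finset.mem_univ, true_and, Set.mem_ofPred_eq] at hδ
    exact tableauOf_mem_tabSetLe_iff.2 hδ

end Transitions

section MinWords

variable {n k : ℕ} {δ : Fin n → Fin k → Fin n} {i₀ q : Fin n} {u v w : List (Fin k)}

theorem run_append_singleton (δ : Fin n → Fin k → Fin n) (p : Fin n) (u : List (Fin k))
    (a : Fin k) : run δ p (u ++ [a]) = δ (run δ p u) a := by
  simp [run]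

theorem exists_isMinWord (h : ∃ w, run δ i₀ w = q) : ∃ u, IsMinWord δ i₀ u q := by
  obtain ⟨u, hu, hmin⟩ := wellFounded_shortlexLt.has_min {w | run δ i₀ w = q} h
  refine ⟨u, hu, fun v hv => ?_⟩
  rcases shortlexLt_trichotomous u v with h | h | h
  · exact Or.inr h
  · exact Or.inl h
  · exact absurd h (hmin v hv)

theorem IsMinWord.not_shortlexLt (hu : IsMinWord δ i₀ u q) (hv : run δ i₀ v = q) :
    ¬ShortlexLt v u := by
  rcases hu.2 v hv with rfl | h
  · exact ShortlexLt.irrefl _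
  · exact h.asymm

theorem IsMinWord.unique (hu : IsMinWord δ i₀ u q) (hv : IsMinWord δ i₀ v q) : u = v :=
  (hu.2 v hv.1).resolve_right (hv.not_shortlexLt hu.1)

theorem IsMinWord.exists_eq_append_singleton (hu : IsMinWord δ i₀ u q) (hq : q ≠ i₀) :
    ∃ w a, u = w ++ [a] ∧ IsMinWord δ i₀ w (run δ i₀ w) ∧ δ (run δ i₀ w) a = q := by
  obtain rfl | ⟨w, a, rfl⟩ := u.eq_nil_or_concat'
  · exact absurd hu.1.symm hq
  refine ⟨w, a, rfl, ⟨rfl, fun v hv => ?_⟩, (run_append_singleton δ i₀ w a).symm.trans hu.1⟩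
  rcases shortlexLt_trichotomous w v with h | h | h
  · exact Or.inr h
  · exact Or.inl h
  · refine absurd (shortlexLt_append_singleton_iff (a := a).2 (Or.inl h)) (hu.not_shortlexLt ?_)
    rw [run_append_singleton, hv, ← run_append_singleton δ i₀ w a, hu.1]

end MinWords

section BFS

variable {n k : ℕ}

noncomputable def bfsWord (g : Fin n ×ₗ Fin k → Fin n) (q : Fin n) : List (Fin k) :=
  if h : ∃ f, IsFirstOcc g q f ∧ (ofLex f).1 < q then
    bfsWord g (ofLex h.choose).1 ++ [(ofLex h.choose).2]
  else []
termination_by q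
decreasing_by exact h.choose_spec.2

theorem bfsWord_of_isFirstOcc {g : Fin n ×ₗ Fin k → Fin n} {q : Fin n} {f : Fin n ×ₗ Fin k}
    (hf : IsFirstOcc g q f) (hlt : (ofLex f).1 < q) :
    bfsWord g q = bfsWord g (ofLex f).1 ++ [(ofLex f).2] := by
  have h : ∃ f, IsFirstOcc g q f ∧ (ofLex f).1 < q := ⟨f, hf, hlt⟩
  rw [bfsWord, dif_pos h, h.choose_spec.1.unique hf]

variable [NeZero n] {δ : Fin n → Fin k → Fin n}

theorem bfsWord_zero (g : Fin n ×ₗ Fin k → Fin n) : bfsWord g 0 = [] := by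
  rw [bfsWord, dif_neg]
  rintro ⟨f, -, hf⟩
  exact Fin.not_lt_zero _ hf

theorem isBFSTable_of_bfsOrdered (hacc : Accessible δ) (hbfs : BFSOrdered δ 0) :
    IsBFSTable (lexTable δ) := by
  choose U hU using fun q => exists_isMinWord (hacc q)
  have hmono (p q : Fin n) (h : p < q) : ShortlexLt (U p) (U q) := hbfs p q h _ _ (hU p) (hU q)
  have hext (f f' : Fin n ×ₗ Fin k) (h : f < f') :
      ShortlexLt (U (ofLex f).1 ++ [(ofLex f).2]) (U (ofLex f').1 ++ [(ofLex f').2]) :=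
    shortlexLt_append_of_lt h (hmono _ _)
  have hparent (q : Fin n) (hq : q ≠ 0) :
      ∃ f, IsFirstOcc (lexTable δ) q f ∧ U q = U (ofLex f).1 ++ [(ofLex f).2] := by
    obtain ⟨w, a, hw, hwmin, hwa⟩ := (hU q).exists_eq_append_singleton hq
    obtain ⟨f, hf⟩ := exists_isFirstOcc (g := lexTable δ) (j := toLex (run δ 0 w, a)) hwa
    have hUw : U (run δ 0 w) = w := (hU _).unique hwmin
    refine ⟨f, hf, ?_⟩
    rcases (hf.le (j := toLex (run δ 0 w, a)) hwa).lt_or_eq with hlt | rfl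
    · refine absurd (hext _ _ hlt) ?_
      simp only [ofLex_toLex, hUw, ← hw]
      exact (hU q).not_shortlexLt (by rw [run_append_singleton, (hU _).1]; exact hf.1)
    · simp [hw, hUw]
  refine ⟨fun q hq => ?_, fun {q r f f'} hq hqr hf hf' => ?_⟩
  · obtain ⟨f, hf, hUq⟩ := hparent q hq
    refine ⟨f, hf, lt_of_shortlexLt hmono ?_⟩
    rw [hUq]
    exact shortlexLt_append_singleton _ _
  · obtain ⟨f₁, hf₁, hUq⟩ := hparent q hq
    obtain ⟨f₂, hf₂, hUr⟩ := hparent r (ne_zero_of_lt hqr)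
    rw [hf.unique hf₁, hf'.unique hf₂]
    exact lt_of_shortlexLt (U := fun f => U (ofLex f).1 ++ [(ofLex f).2]) hext
      (hUq ▸ hUr ▸ hmono q r hqr)

section OfIsBFSTable

variable (h : IsBFSTable (lexTable δ))
include h

theorem run_bfsWord (q : Fin n) : run δ 0 (bfsWord (lexTable δ) q) = q := by
  induction q using WellFoundedLT.induction with
  | _ q ih =>
    rcases eq_or_ne q 0 with rfl | hq
    · rw [bfsWord_zero]
      rfl
    · obtain ⟨f, hf, hlt⟩ := h.exists_parent q hq
      rw [bfsWord_of_isFirstOcc hf hlt, run_append_singleton, ih _ hlt]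
      exact hf.1

theorem bfsWord_strictMono (p q : Fin n) (hpq : p < q) :
    ShortlexLt (bfsWord (lexTable δ) p) (bfsWord (lexTable δ) q) := by
  induction q using WellFoundedLT.induction generalizing p with
  | _ q ih =>
    obtain ⟨f', hf', hlt'⟩ := h.exists_parent q (ne_zero_of_lt hpq)
    rw [bfsWord_of_isFirstOcc hf' hlt']
    rcases eq_or_ne p 0 with rfl | hp
    · rw [bfsWord_zero]
      exact Or.inl (by simp)
    · obtain ⟨f, hf, hlt⟩ := h.exists_parent p hp
      rw [bfsWord_of_isFirstOcc hf hlt]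
      exact shortlexLt_append_of_lt (h.first_lt_first hp hpq hf hf') (ih _ hlt' _)

theorem isMinWord_bfsWord (q : Fin n) : IsMinWord δ 0 (bfsWord (lexTable δ) q) q := by
  refine ⟨run_bfsWord h q, fun w hw => ?_⟩
  induction w using List.reverseRecOn generalizing q with
  | nil =>
    obtain rfl : q = 0 := hw.symm
    exact Or.inl (bfsWord_zero _)
  | append_singleton w a ih =>
    rw [run_append_singleton] at hw
    rcases eq_or_ne q 0 with rfl | hq
    · rw [bfsWord_zero]
      exact Or.inr (Or.inl (by simp))
    obtain ⟨f, hf, hlt⟩ := h.exists_parent q hq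
    rw [bfsWord_of_isFirstOcc hf hlt]
    refine eq_or_shortlexLt_trans (v := bfsWord (lexTable δ) (run δ 0 w) ++ [a]) ?_ ?_
    · rcases (hf.le (j := toLex (run δ 0 w, a)) hw).lt_or_eq with hlt | rfl
      · exact Or.inr (shortlexLt_append_of_lt hlt (bfsWord_strictMono h _ _))
      · exact Or.inl rfl
    · rcases ih _ rfl with heq | hlt
      · exact Or.inl (by rw [heq])
      · exact Or.inr (shortlexLt_append_singleton_iff.2 (Or.inl hlt))

end OfIsBFSTable

theorem isBFSTable_lexTable_iff : IsBFSTable (lexTable δ) ↔ Accessible δ ∧ BFSOrdered δ 0 := by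
  refine ⟨fun h => ⟨fun q => ⟨_, run_bfsWord h q⟩, fun p q hpq u v hu hv => ?_⟩,
    fun h => isBFSTable_of_bfsOrdered h.1 h.2⟩
  rw [hu.unique (isMinWord_bfsWord h p), hv.unique (isMinWord_bfsWord h q)]
  exact bfsWord_strictMono h p q hpq

end BFS

theorem statement15_general (n k : ℕ) (hn : 1 ≤ n) :
    (tabSetLe (k * n + 1) n fun y : Fin n => k * (y : ℕ) + 1).card =
      (Finset.univ.filter fun δ : Fin n → Fin k → Fin n =>
        Accessible δ ∧ BFSOrdered δ ⟨0, hn⟩).card := by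
  have : NeZero n := ⟨by omega⟩
  rw [card_tabSetLe_eq]
  exact congrArg Finset.card (Finset.filter_congr fun δ _ => isBFSTable_lexTable_iff)

/-- For `n, k ≥ 1`, with `N = kn+1` and
`f̂^∅(y) = k(y-1)+1`, the number of `k`-Dyck tableaux `|𝒯[N×n; f̂^∅]|` equals
the number of accessible transition structures on `[n]` over a `k`-letter
alphabet whose states are indexed in breadth-first order. -/
theorem statement15 (n k : ℕ) (hn : 1 ≤ n) (hk : 1 ≤ k) :
    (tabSetLe (k * n + 1) n fun y : Fin n => k * (y : ℕ) + 1).card =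
      (Finset.univ.filter fun δ : Fin n → Fin k → Fin n =>
        Accessible δ ∧ BFSOrdered δ ⟨0, hn⟩).card :=
  statement15_general n k hn

end ArxivAutomata
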